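/- Let 1 ≤ k ≤ n and v ∈ Λ_k(ℝⁿ). Then span(v) is the smallest linear subspace W of ℝⁿ such that v ∈ Λ_k(W): namely, v lies in the image of Λ_k(span(v)) under the canonical inclusion into Λ_k(ℝⁿ), and for every linear subspace W ⊆ ℝⁿ with v in the image of Λ_k(W) one has span(v) ⊆ W. -/

import Mathlib

open MeasureTheory Metric Filter ENNReal Topology

noncomputable section

/-- Euclidean `n`-space. -/
abbrev Euc (n : ℕ) := EuclideanSpace ℝ (Fin n)

/-- Coordinates of an element of the exterior algebra of `ℝⁿ` with respect to the
standard basis `{e_s : s ⊆ {1,…,n}}`.  The degree-`k` part corresponds to the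
coefficients indexed by sets of cardinality `k`, i.e. to `Λ_k(ℝⁿ)` (resp. `Λ^k(ℝⁿ)`). -/
abbrev MV (n : ℕ) := Finset (Fin n) → ℝ

namespace MV

variable {n : ℕ}

/-- `v` belongs to `Λ_k(ℝⁿ)` (equivalently `Λ^k(ℝⁿ)`): only coefficients of degree `k`
are nonzero. -/
def IsGrade (k : ℕ) (v : MV n) : Prop := ∀ s : Finset (Fin n), s.card ≠ k → v s = 0

/-- The duality pairing `⟨ζ; α⟩ := Σ_i ζ_i α_i`. -/
def pair (v w : MV n) : ℝ := ∑ s : Finset (Fin n), v s * w s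

/-- The sign `(-1)^{#{(a,b) ∈ s × t : b < a}}` showing up in the wedge product of basis
elements: `e_s ∧ e_t = sign s t • e_{s ∪ t}` for disjoint `s`, `t`. -/
def sign (s t : Finset (Fin n)) : ℝ :=
  (-1 : ℝ) ^ ((s ×ˢ t).filter fun p => p.2 < p.1).card

/-- The wedge product, in coordinates. -/
def wedge (v w : MV n) : MV n :=
  fun u => ∑ s ∈ u.powerset, sign s (u \ s) * v s * w (u \ s)

/-- The basis multivector `e_t` (resp. basis covector `dx_t`). -/
def delta (t : Finset (Fin n)) : MV n := fun s => if s = t then 1 else 0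

/-- Interior multiplication `ζ ⌟ α`, characterized by `⟨ζ ⌟ α; β⟩ = ⟨ζ; α ∧ β⟩`. -/
def imul (v a : MV n) : MV n := fun t => pair v (wedge a (delta t))

/-- The canonical embedding `ℝⁿ = Λ_1(ℝⁿ) ↪ Λ_•(ℝⁿ)`. -/
def embed (x : Euc n) : MV n := fun s => ∑ i : Fin n, if s = {i} then x i else 0

/-- The canonical identification of the degree-one part of `Λ_•(ℝⁿ)` with `ℝⁿ`. -/
def toVec (v : MV n) : Euc n := WithLp.toLp 2 (fun i => v {i})

/-- The wedge product `w 0 ∧ w 1 ∧ ⋯ ∧ w (k-1)` of a family of vectors of `ℝⁿ`. -/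
def wedgeFam {k : ℕ} (w : Fin k → Euc n) : MV n :=
  (List.ofFn fun i => embed (w i)).foldr wedge (delta ∅)

/-- A `k`-vector is simple if it is a wedge product of `k` vectors of `ℝⁿ`. -/
def IsSimple (k : ℕ) (v : MV n) : Prop := ∃ w : Fin k → Euc n, v = wedgeFam w

/-- `span(v) := {v ⌟ α : α ∈ Λ^{k-1}(ℝⁿ)} ⊆ ℝⁿ`, for `v ∈ Λ_k(ℝⁿ)`. -/
def spanSet (k : ℕ) (v : MV n) : Set (Euc n) :=
  {u | ∃ a : MV n, IsGrade (k - 1) a ∧ u = toVec (imul v a)}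

/-- The (Euclidean) norm of a multivector. -/
def norm' (v : MV n) : ℝ := Real.sqrt (∑ s : Finset (Fin n), v s ^ 2)

/-- The exterior derivative of a (multi)covector field, in coordinates:
`(dψ)_u(x) = Σ_{i ∈ u} sign({i}, u \ {i}) ∂_i ψ_{u \ {i}}(x)`. -/
def extDeriv (ψ : Euc n → MV n) (x : Euc n) : MV n :=
  fun u => ∑ i ∈ u, sign {i} (u \ {i}) * fderiv ℝ ψ x (EuclideanSpace.single i 1) (u \ {i})

end MV

/-- `x` is an `h`-superdensity point of `E` with respect to `λ`, i.e.
`λ(B_r(x) ∖ E) = λ(B_r(x))·o(r^h)` as `r → 0+`. -/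
def SuperdensityPt {n : ℕ} (lam : Measure (Euc n)) (h : ℝ) (E : Set (Euc n)) (x : Euc n) :
    Prop :=
  ∀ ε > (0 : ℝ), ∃ r₀ > (0 : ℝ), ∀ r : ℝ, 0 < r → r < r₀ →
    lam (ball x r \ E) ≤ ENNReal.ofReal (ε * r ^ h) * lam (ball x r)

/-- The upper `s`-density `Θ^{*s}(μ, x) := limsup_{r→0+} μ(B_r(x))/(2r)^s`. -/
def upperDensity {n : ℕ} (μ : Measure (Euc n)) (s : ℝ) (x : Euc n) : ℝ≥0∞ :=
  Filter.limsup (fun r : ℝ => μ (ball x r) / ENNReal.ofReal ((2 * r) ^ s)) (𝓝[>] 0)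

/-- The lower `s`-density `Θ^s_*(μ, x) := liminf_{r→0+} μ(B_r(x))/(2r)^s`. -/
def lowerDensity {n : ℕ} (μ : Measure (Euc n)) (s : ℝ) (x : Euc n) : ℝ≥0∞ :=
  Filter.liminf (fun r : ℝ => μ (ball x r) / ENNReal.ofReal ((2 * r) ^ s)) (𝓝[>] 0)

/-- The upper derivative `D̄(λ, μ, x) := limsup_{r→0+} λ(B_r(x))/μ(B_r(x))`. -/
def upperDeriv {n : ℕ} (lam μ : Measure (Euc n)) (x : Euc n) : ℝ≥0∞ :=
  Filter.limsup (fun r : ℝ => lam (ball x r) / μ (ball x r)) (𝓝[>] 0)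

/-- The total variation `|τμ| = |τ|μ` of the current `T = τμ`. -/
def totalVar {n : ℕ} (τ : Euc n → MV n) (μ : Measure (Euc n)) : Measure (Euc n) :=
  μ.withDensity fun x => ENNReal.ofReal (MV.norm' (τ x))

/-- The Lebesgue-point conditions (3.2): the `μ`-averages of `τ` and of `|τ|` on `B_r(x)`
converge to `τ(x)` and `|τ(x)|` respectively, as `r → 0+`. -/
def LebesguePt {n : ℕ} (μ : Measure (Euc n)) (τ : Euc n → MV n) (x : Euc n) : Prop :=
  Tendsto (fun r : ℝ => (μ (ball x r)).toReal⁻¹ • ∫ y in ball x r, τ y ∂μ)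
    (𝓝[>] 0) (𝓝 (τ x)) ∧
  Tendsto (fun r : ℝ => (∫ y in ball x r, MV.norm' (τ y) ∂μ) / (μ (ball x r)).toReal)
    (𝓝[>] 0) (𝓝 (MV.norm' (τ x)))

/-- `K(τ, ω) := {y ∈ U : ⟨τ(y) ⌟ α; ω_y⟩ = 0 for all α ∈ Λ^{h-l}(ℝⁿ)}`, where `τ` is an
`h`-vectorfield and `ω` a differential `l`-form on `U`. -/
def Kset {n : ℕ} (h l : ℕ) (U : Set (Euc n)) (τ : Euc n → MV n) (ω : Euc n → MV n) :
    Set (Euc n) :=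
  {y ∈ U | ∀ a : MV n, MV.IsGrade (h - l) a → MV.pair (MV.imul (τ y) a) (ω y) = 0}

/-- `T = τμ` is a normal `h`-current on `Ω` with `∂T = τ'μ'` : both measures are finite,
`τ, τ'` are Borel and integrable, take values in `Λ_h` resp. `Λ_{h-1}`, and
`∫ ⟨τ'; ψ⟩ dμ' = ∫ ⟨τ; dψ⟩ dμ` for every smooth compactly supported `(h-1)`-form `ψ` on `Ω`. -/
def IsNormalPair {n : ℕ} (h : ℕ) (Ω : Set (Euc n)) (μ μ' : Measure (Euc n))
    (τ τ' : Euc n → MV n) : Prop :=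
  IsFiniteMeasure μ ∧ IsFiniteMeasure μ' ∧
  Measurable τ ∧ Measurable τ' ∧
  Integrable τ μ ∧ Integrable τ' μ' ∧
  (∀ x, MV.IsGrade h (τ x)) ∧ (∀ x, MV.IsGrade (h - 1) (τ' x)) ∧
  ∀ ψ : Euc n → MV n, ContDiff ℝ (⊤ : ℕ∞) ψ → HasCompactSupport ψ → tsupport ψ ⊆ Ω →
    (∀ y, MV.IsGrade (h - 1) (ψ y)) →
    ∫ y, MV.pair (τ' y) (ψ y) ∂μ' = ∫ y, MV.pair (τ y) (MV.extDeriv ψ y) ∂μ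

/-- `D` is a `k`-distribution of class `C^p` on `Ω`: each `D(x)` is a `k`-dimensional
subspace and, locally, `D` is the intersection of the kernels of `n - k` differential
1-forms of class `C^p` (the defining forms). -/
def IsDistribution {n : ℕ} (p : ℕ∞) (k : ℕ) (Ω : Set (Euc n))
    (D : Euc n → Submodule ℝ (Euc n)) : Prop :=
  (∀ x ∈ Ω, Module.finrank ℝ (D x) = k) ∧
  ∀ x ∈ Ω, ∃ U : Set (Euc n), U ⊆ Ω ∧ IsOpen U ∧ x ∈ U ∧
    ∃ ω : Fin (n - k) → Euc n → (Euc n →L[ℝ] ℝ),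
      (∀ j, ContDiffOn ℝ p (ω j) U) ∧
      ∀ y ∈ U, D y = ⨅ j, LinearMap.ker (ω j y : Euc n →ₗ[ℝ] ℝ)

/-- The tangency set `Γ(τ, D) := {x ∈ Ω : span(τ(x)) ⊆ D(x)}` of a `k`-vectorfield `τ`
with respect to a distribution `D`. -/
def tangencySet {n : ℕ} (k : ℕ) (Ω : Set (Euc n)) (τ : Euc n → MV n)
    (D : Euc n → Submodule ℝ (Euc n)) : Set (Euc n) :=
  {x ∈ Ω | MV.spanSet k (τ x) ⊆ (D x : Set (Euc n))}

/-- A `C¹` `k`-distribution `D` is involutive at `x`: for some family of `C¹` defining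
forms `ω⁽¹⁾, …, ω⁽ⁿ⁻ᵏ⁾` near `x`, each `(dω⁽ʲ⁾)_x` vanishes on `D(x) × D(x)`;
here `(dω)_x(u, v) = (Dω_x u)(v) − (Dω_x v)(u)`. -/
def InvolutiveAt {n : ℕ} (k : ℕ) (Ω : Set (Euc n)) (D : Euc n → Submodule ℝ (Euc n))
    (x : Euc n) : Prop :=
  ∃ U : Set (Euc n), U ⊆ Ω ∧ IsOpen U ∧ x ∈ U ∧
    ∃ ω : Fin (n - k) → Euc n → (Euc n →L[ℝ] ℝ),
      (∀ j, ContDiffOn ℝ 1 (ω j) U) ∧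
      (∀ y ∈ U, D y = ⨅ j, LinearMap.ker (ω j y : Euc n →ₗ[ℝ] ℝ)) ∧
      ∀ j, ∀ u ∈ D x, ∀ v ∈ D x, fderiv ℝ (ω j) x u v = fderiv ℝ (ω j) x v u

/-- `v ∈ Λ_k(W)` for a subspace `W ⊆ ℝⁿ`: `v` lies in the image of `Λ_k(W)` under the
canonical inclusion into `Λ_k(ℝⁿ)`, i.e. `v` is in the linear span of the wedge products
of `k` vectors of `W`. -/
def MemLambdaK {n : ℕ} (k : ℕ) (v : MV n) (W : Submodule ℝ (Euc n)) : Prop :=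
  v ∈ Submodule.span ℝ
    {z : MV n | ∃ w : Fin k → Euc n, (∀ i, w i ∈ W) ∧ z = MV.wedgeFam w}

/-!
For `x ∈ ℝⁿ` write `ι_x v := v ⌟ x`, with `x` read as a 1-covector (`imul v (embed x)`).

Minimality: `ι_x` is an antiderivation, so contracting `x ∧ V` against `α ∧ dxᵢ` gives
`(x ∧ V) ⌟ α = V ⌟ ι_x α ± ⟨V; α⟩ x`; by induction on the number of factors, every contraction
of a wedge of vectors of `W` lies in `W`.

Membership: the coordinates of `ι_x v` are `± ⟨v ⌟ dx_t, x⟩`, so `ι_x v = 0` for `x ⊥ span(v)`.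
Any `v ∈ Λ_k` with `ι_x v = 0` for all `x ⊥ W` lies in `Λ_k(W)`. Indeed, by the Euler identity
`Σᵢ eᵢ ∧ (v ⌟ dxᵢ) = k v`; writing `eᵢ = (eᵢ - Qeᵢ) + Qeᵢ` with `Q` the orthogonal projection
onto `W^⊥`, the symmetry of `Q` turns the `Qeᵢ` part into `Σⱼ eⱼ ∧ ι_{Qeⱼ} v = 0`. Hence
`k v = Σᵢ (eᵢ - Qeᵢ) ∧ (v ⌟ dxᵢ)` with `eᵢ - Qeᵢ ∈ W`, and each `v ⌟ dxᵢ` satisfies the same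
hypothesis in degree `k - 1` because contractions anticommute.
-/

namespace MV

open Finset

variable {n : ℕ}

section Sign

lemma sign_mul_self (s t : Finset (Fin n)) : sign s t * sign s t = 1 := by
  rw [sign, ← pow_add]
  exact Even.neg_one_pow ⟨_, rfl⟩

lemma sign_union_right (s : Finset (Fin n)) {t t' : Finset (Fin n)} (h : Disjoint t t') :
    sign s (t ∪ t') = sign s t * sign s t' := by
  rw [sign, sign, sign, ← pow_add, product_union, filter_union, card_union_of_disjoint]
  exact disjoint_filter_filter (disjoint_product.mpr (Or.inr h))

lemma sign_union_left {s s' : Finset (Fin n)} (t : Finset (Fin n)) (h : Disjoint s s') :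
    sign (s ∪ s') t = sign s t * sign s' t := by
  rw [sign, sign, sign, ← pow_add, union_product, filter_union, card_union_of_disjoint]
  exact disjoint_filter_filter (disjoint_product.mpr (Or.inl h))

lemma sign_singleton_singleton (i j : Fin n) :
    sign ({i} : Finset (Fin n)) {j} = if j < i then -1 else 1 := by
  rw [sign, singleton_product_singleton, filter_singleton]
  split_ifs <;> simp

lemma sign_singleton_swap {i j : Fin n} (h : i ≠ j) :
    sign ({i} : Finset (Fin n)) {j} = -sign {j} {i} := by
  rw [sign_singleton_singleton, sign_singleton_singleton]
  rcases h.lt_or_gt with h' | h' <;> simp [h', h'.not_gt]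

lemma sign_singleton_left (i : Fin n) (t : Finset (Fin n)) :
    sign {i} t = (-1 : ℝ) ^ #{b ∈ t | b < i} := by
  rw [sign, singleton_product, filter_map, card_map]
  rfl

lemma sign_singleton_right (t : Finset (Fin n)) (i : Fin n) :
    sign t {i} = (-1 : ℝ) ^ #{a ∈ t | i < a} := by
  rw [sign, product_singleton, filter_map, card_map]
  rfl

lemma sign_singleton_mul_sign_singleton {i : Fin n} {t : Finset (Fin n)} (h : i ∉ t) :
    sign {i} t * sign t {i} = (-1 : ℝ) ^ #t := by
  rw [sign_singleton_left, sign_singleton_right, ← pow_add,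
    ← card_filter_add_card_filter_not (s := t) (p := (· < i))]
  congr 3
  refine filter_congr fun a ha => ?_
  have : a ≠ i := ne_of_mem_of_not_mem ha h
  simp only [not_lt, this.symm.le_iff_lt]

lemma sign_singleton_eq {i : Fin n} {t : Finset (Fin n)} (h : i ∉ t) :
    sign {i} t = (-1 : ℝ) ^ #t * sign t {i} := by
  rw [← sign_singleton_mul_sign_singleton h, mul_assoc, sign_mul_self, mul_one]

end Sign

section Linear

lemma pair_eq_dotProduct (v w : MV n) : pair v w = v ⬝ᵥ w := rfl

lemma delta_eq_single (t : Finset (Fin n)) : delta t = Pi.single t 1 := by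
  ext s
  simp [delta, Pi.single_apply]

lemma pair_comm (v w : MV n) : pair v w = pair w v := dotProduct_comm v w

lemma pair_delta_right (v : MV n) (t : Finset (Fin n)) : pair v (delta t) = v t := by
  rw [delta_eq_single, pair_eq_dotProduct, dotProduct_single, mul_one]

lemma pair_delta_left (t : Finset (Fin n)) (w : MV n) : pair (delta t) w = w t := by
  rw [pair_comm, pair_delta_right]

lemma eq_sum_smul_delta (v : MV n) : v = ∑ s, v s • delta s := by
  simp only [delta_eq_single, ← Pi.single_smul, smul_eq_mul, mul_one]
  exact (Finset.univ_sum_single v).symm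

lemma wedge_add_left (a b z : MV n) : wedge (a + b) z = wedge a z + wedge b z := by
  ext u
  simp only [wedge, Pi.add_apply, mul_add, add_mul, sum_add_distrib]

lemma wedge_add_right (z a b : MV n) : wedge z (a + b) = wedge z a + wedge z b := by
  ext u
  simp only [wedge, Pi.add_apply, mul_add, sum_add_distrib]

lemma wedge_smul_left (c : ℝ) (a z : MV n) : wedge (c • a) z = c • wedge a z := by
  ext u
  simp only [wedge, Pi.smul_apply, smul_eq_mul, mul_sum]
  exact sum_congr rfl fun _ _ => by ring

lemma wedge_smul_right (c : ℝ) (z a : MV n) : wedge z (c • a) = c • wedge z a := by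
  ext u
  simp only [wedge, Pi.smul_apply, smul_eq_mul, mul_sum]
  exact sum_congr rfl fun _ _ => by ring

def wedgeₗ : MV n →ₗ[ℝ] MV n →ₗ[ℝ] MV n :=
  LinearMap.mk₂ ℝ wedge wedge_add_left wedge_smul_left wedge_add_right wedge_smul_right

lemma wedge_sum_left {ι : Type*} (s : Finset ι) (f : ι → MV n) (z : MV n) :
    wedge (∑ i ∈ s, f i) z = ∑ i ∈ s, wedge (f i) z :=
  map_sum (wedgeₗ.flip z) f s

lemma wedge_sum_right {ι : Type*} (z : MV n) (s : Finset ι) (f : ι → MV n) :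
    wedge z (∑ i ∈ s, f i) = ∑ i ∈ s, wedge z (f i) :=
  map_sum (wedgeₗ z) f s

lemma imul_add_left (v v' a : MV n) : imul (v + v') a = imul v a + imul v' a := by
  ext t
  simp only [imul, pair_eq_dotProduct, Pi.add_apply, add_dotProduct]

lemma imul_smul_left (c : ℝ) (v a : MV n) : imul (c • v) a = c • imul v a := by
  ext t
  simp only [imul, pair_eq_dotProduct, Pi.smul_apply, smul_dotProduct, smul_eq_mul]

lemma imul_add_right (v a b : MV n) : imul v (a + b) = imul v a + imul v b := by
  ext t
  simp only [imul, pair_eq_dotProduct, Pi.add_apply, wedge_add_left, dotProduct_add]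

lemma imul_smul_right (c : ℝ) (v a : MV n) : imul v (c • a) = c • imul v a := by
  ext t
  simp only [imul, pair_eq_dotProduct, Pi.smul_apply, wedge_smul_left, dotProduct_smul,
    smul_eq_mul]

def imulₗ : MV n →ₗ[ℝ] MV n →ₗ[ℝ] MV n :=
  LinearMap.mk₂ ℝ imul imul_add_left imul_smul_left imul_add_right imul_smul_right

lemma imul_sum_left {ι : Type*} (s : Finset ι) (f : ι → MV n) (a : MV n) :
    imul (∑ i ∈ s, f i) a = ∑ i ∈ s, imul (f i) a :=
  map_sum (imulₗ.flip a) f s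

lemma imul_sum_right {ι : Type*} (v : MV n) (s : Finset ι) (f : ι → MV n) :
    imul v (∑ i ∈ s, f i) = ∑ i ∈ s, imul v (f i) :=
  map_sum (imulₗ v) f s

def toVecₗ : MV n →ₗ[ℝ] Euc n where
  toFun := toVec
  map_add' _ _ := rfl
  map_smul' _ _ := rfl

lemma toVec_apply (v : MV n) (i : Fin n) : toVec v i = v {i} := rfl

lemma pair_imul (v a b : MV n) : pair (imul v a) b = pair v (wedge a b) := by
  conv_rhs => rw [eq_sum_smul_delta b, wedge_sum_right]
  simp only [wedge_smul_right, pair_eq_dotProduct, dotProduct_sum, dotProduct_smul]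
  rw [dotProduct_comm]
  rfl

lemma embed_eq_sum (x : Euc n) : embed x = ∑ i, x i • delta {i} := by
  ext s
  simp [embed, delta, Finset.sum_apply]

lemma embed_sub (x y : Euc n) : embed (x - y) = embed x - embed y := by
  simp only [embed_eq_sum, PiLp.sub_apply, sub_smul, sum_sub_distrib]

lemma delta_singleton_eq_embed (i : Fin n) :
    delta {i} = embed (EuclideanSpace.single i (1 : ℝ)) := by
  rw [embed_eq_sum, Finset.sum_eq_single i] <;> simp_all

lemma imul_embed (v : MV n) (x : Euc n) : imul v (embed x) = ∑ i, x i • imul v (delta {i}) := by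
  simp only [embed_eq_sum, imul_sum_right, imul_smul_right]

lemma wedge_embed_left (x : Euc n) (z : MV n) :
    wedge (embed x) z = ∑ i, x i • wedge (delta {i}) z := by
  simp only [embed_eq_sum, wedge_sum_left, wedge_smul_left]

end Linear

section Coordinates

lemma wedge_delta_left_apply (s : Finset (Fin n)) (z : MV n) (u : Finset (Fin n)) :
    wedge (delta s) z u = if s ⊆ u then sign s (u \ s) * z (u \ s) else 0 := by
  simp only [wedge, delta, mul_ite, mul_one, mul_zero, ite_mul, zero_mul]
  rw [sum_ite_eq']
  simp [mem_powerset]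

lemma wedge_delta_right_apply (z : MV n) (s u : Finset (Fin n)) :
    wedge z (delta s) u = if s ⊆ u then sign (u \ s) s * z (u \ s) else 0 := by
  rw [wedge, sum_eq_single (u \ s)]
  · by_cases h : s ⊆ u <;> simp [delta, h]
  · intro s' hs' hne
    have : u \ s' ≠ s := by
      rintro rfl
      exact hne (Finset.sdiff_sdiff_eq_self (mem_powerset.mp hs')).symm
    simp [delta, this]
  · intro h
    exact absurd (mem_powerset.mpr sdiff_subset) h

lemma wedge_delta_delta (s t : Finset (Fin n)) :
    wedge (delta s) (delta t) = if Disjoint s t then sign s t • delta (s ∪ t) else 0 := by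
  ext u
  rw [wedge_delta_left_apply]
  by_cases h : Disjoint s t ∧ u = s ∪ t
  · obtain ⟨hd, rfl⟩ := h
    simp [delta, hd, union_sdiff_cancel_left hd]
  · have h' : ¬(s ⊆ u ∧ u \ s = t) := fun ⟨hsu, hut⟩ =>
      h ⟨hut ▸ disjoint_sdiff, hut ▸ (union_sdiff_of_subset hsu).symm⟩
    rw [not_and] at h h'
    split_ifs <;> simp_all [delta]

lemma imul_delta_apply (v : MV n) (s u : Finset (Fin n)) :
    imul v (delta s) u = if Disjoint s u then sign s u * v (s ∪ u) else 0 := by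
  rw [imul, wedge_delta_delta]
  split_ifs
  · rw [pair_eq_dotProduct, dotProduct_smul, ← pair_eq_dotProduct, pair_delta_right, smul_eq_mul]
  · exact dotProduct_zero v

lemma imul_delta_singleton_apply (v : MV n) (i : Fin n) (t : Finset (Fin n)) :
    imul v (delta {i}) t = if i ∈ t then 0 else sign {i} t * v (insert i t) := by
  simp only [imul_delta_apply, disjoint_singleton_left, ← insert_eq]
  split_ifs <;> rfl

lemma imul_embed_apply (v : MV n) (x : Euc n) (t : Finset (Fin n)) :
    imul v (embed x) t = ∑ i, if i ∈ t then 0 else sign {i} t * x i * v (insert i t) := by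
  rw [imul_embed, Finset.sum_apply]
  refine sum_congr rfl fun i _ => ?_
  rw [Pi.smul_apply, imul_delta_singleton_apply, smul_eq_mul]
  split_ifs <;> ring

end Coordinates

lemma IsGrade.imul_embed {g : ℕ} {v : MV n} (hv : IsGrade g v) (x : Euc n) :
    IsGrade (g - 1) (imul v (embed x)) := by
  intro t ht
  rw [imul_embed_apply]
  refine sum_eq_zero fun i _ => ?_
  split_ifs with hi
  · rfl
  · rw [hv _ (by rw [card_insert_of_notMem hi]; omega), mul_zero]

lemma IsGrade.imul_delta_singleton {g : ℕ} {v : MV n} (hv : IsGrade (g + 1) v) (i : Fin n) :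
    IsGrade g (imul v (delta {i})) := by
  simpa [delta_singleton_eq_embed] using hv.imul_embed (EuclideanSpace.single i 1)

lemma isGrade_delta (t : Finset (Fin n)) : IsGrade #t (delta t) := by
  intro s hs
  simp only [delta, ite_eq_right_iff, one_ne_zero, imp_false]
  rintro rfl
  exact hs rfl

lemma pair_wedge_embed (x : Euc n) (v c : MV n) :
    pair (wedge (embed x) v) c = pair v (imul c (embed x)) := by
  rw [pair_comm, ← pair_imul, pair_comm]

section Minimality

lemma imul_wedge_delta_singleton_self {g : ℕ} {a : MV n} (ha : IsGrade g a) (i : Fin n) :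
    imul (wedge a (delta {i})) (delta {i})
      = wedge (imul a (delta {i})) (delta {i}) + (-1 : ℝ) ^ g • a := by
  ext t
  simp only [Pi.add_apply, Pi.smul_apply, smul_eq_mul, imul_delta_singleton_apply,
    wedge_delta_right_apply, singleton_subset_iff, sdiff_singleton_eq_erase, mem_insert]
  rcases eq_or_ne (a t) 0 with hat | hat
  · by_cases hit : i ∈ t <;> simp [hit, hat]
  have hcard : #t = g := not_not.mp (mt (ha t) hat)
  by_cases hit : i ∈ t
  · obtain ⟨g, rfl⟩ : ∃ g', g = g' + 1 := ⟨#t - 1, by have := card_pos.mpr ⟨i, hit⟩; omega⟩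
    have hs : sign (t.erase i) {i} * sign {i} (t.erase i) = (-1) ^ g := by
      rw [mul_comm, sign_singleton_mul_sign_singleton (notMem_erase i t),
        card_erase_of_mem hit, hcard, Nat.add_sub_cancel]
    simp only [hit, notMem_erase, if_true, if_false, insert_erase hit]
    linear_combination (-(a t)) * hs
  · simp only [hit, if_false, true_or, if_true, erase_insert hit, zero_add]
    rw [← mul_assoc, sign_singleton_mul_sign_singleton hit, hcard]

lemma imul_wedge_delta_singleton_of_ne (a : MV n) {i j : Fin n} (hji : j ≠ i) :
    imul (wedge a (delta {i})) (delta {j}) = wedge (imul a (delta {j})) (delta {i}) := by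
  ext t
  simp only [imul_delta_singleton_apply, wedge_delta_right_apply, singleton_subset_iff,
    sdiff_singleton_eq_erase, mem_insert]
  by_cases hjt : j ∈ t
  · simp [hjt, hji]
  by_cases hit : i ∈ t
  · have hj' : j ∉ t.erase i := fun h => hjt (mem_of_mem_erase h)
    have h1 : sign {j} t = sign {j} {i} * sign {j} (t.erase i) := by
      rw [← sign_union_right _ (disjoint_singleton_left.mpr (notMem_erase i t)), ← insert_eq,
        insert_erase hit]
    have h2 : sign (insert j (t.erase i)) {i} = sign {j} {i} * sign (t.erase i) {i} := by
      rw [insert_eq, sign_union_left _ (disjoint_singleton_left.mpr hj')]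
    simp only [hjt, hit, hj', hji.symm, if_false, if_true, or_true, erase_insert_of_ne hji,
      h1, h2]
    linear_combination sign {j} (t.erase i) * sign (t.erase i) {i} *
      a (insert j (t.erase i)) * sign_mul_self {j} {i}
  · simp [hjt, hit, hji.symm]

lemma imul_wedge_delta_singleton_delta_singleton {g : ℕ} {a : MV n} (ha : IsGrade g a)
    (i j : Fin n) :
    imul (wedge a (delta {i})) (delta {j})
      = wedge (imul a (delta {j})) (delta {i}) + (if j = i then (-1 : ℝ) ^ g else 0) • a := by
  obtain rfl | hji := eq_or_ne j i
  · simp [imul_wedge_delta_singleton_self ha]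
  · simp [imul_wedge_delta_singleton_of_ne a hji, hji]

lemma imul_wedge_delta_singleton_embed {g : ℕ} {a : MV n} (ha : IsGrade g a) (i : Fin n)
    (x : Euc n) :
    imul (wedge a (delta {i})) (embed x)
      = wedge (imul a (embed x)) (delta {i}) + ((-1 : ℝ) ^ g * x i) • a := by
  simp only [imul_embed, wedge_sum_left, imul_wedge_delta_singleton_delta_singleton ha,
    smul_add, sum_add_distrib, wedge_smul_left, ite_smul, zero_smul, smul_ite, smul_zero,
    sum_ite_eq', mem_univ, if_true, smul_smul, mul_comm (x i)]

lemma wedgeFam_zero (w : Fin 0 → Euc n) : wedgeFam w = delta ∅ := rfl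

lemma wedgeFam_succ {m : ℕ} (w : Fin (m + 1) → Euc n) :
    wedgeFam w = wedge (embed (w 0)) (wedgeFam fun i => w i.succ) := by
  rw [wedgeFam, List.ofFn_succ]
  rfl

lemma toVec_imul_wedge_embed {m : ℕ} {a : MV n} (ha : IsGrade m a) (x : Euc n) (v : MV n) :
    toVec (imul (wedge (embed x) v) a)
      = toVec (imul v (imul a (embed x))) + ((-1 : ℝ) ^ m * pair v a) • x := by
  ext i
  simp only [toVec_apply, PiLp.add_apply, PiLp.smul_apply, smul_eq_mul, imul]
  rw [pair_wedge_embed, imul_wedge_delta_singleton_embed ha]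
  simp only [pair_eq_dotProduct, dotProduct_add, dotProduct_smul, smul_eq_mul]
  ring

lemma toVec_imul_wedgeFam_mem (W : Submodule ℝ (Euc n)) {m : ℕ} (w : Fin m → Euc n)
    (hw : ∀ i, w i ∈ W) {a : MV n} (ha : IsGrade (m - 1) a) :
    toVec (imul (wedgeFam w) a) ∈ W := by
  induction m generalizing a with
  | zero =>
    convert W.zero_mem
    ext i
    simp [toVec_apply, wedgeFam_zero, imul, pair_delta_left, wedge_delta_right_apply]
  | succ m ih =>
    rw [wedgeFam_succ, toVec_imul_wedge_embed ha]
    exact W.add_mem (ih _ (fun i => hw i.succ) (ha.imul_embed _)) (W.smul_mem _ (hw 0))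

lemma toVec_imul_mem_of_memLambdaK {k : ℕ} {v : MV n} {W : Submodule ℝ (Euc n)}
    (hv : MemLambdaK k v W) {a : MV n} (ha : IsGrade (k - 1) a) : toVec (imul v a) ∈ W := by
  refine (Submodule.span_le (p := W.comap (toVecₗ ∘ₗ imulₗ.flip a))).mpr ?_ hv
  rintro _ ⟨w, hw, rfl⟩
  exact toVec_imul_wedgeFam_mem W w hw ha

end Minimality

section Spanning

lemma sum_wedge_delta_imul_delta {k : ℕ} {v : MV n} (hv : IsGrade k v) :
    ∑ i, wedge (delta {i}) (imul v (delta {i})) = (k : ℝ) • v := by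
  ext u
  have hterm : ∀ i, wedge (delta {i}) (imul v (delta {i})) u = if i ∈ u then v u else 0 := by
    intro i
    simp only [wedge_delta_left_apply, singleton_subset_iff, imul_delta_singleton_apply,
      sdiff_singleton_eq_erase, notMem_erase, if_false]
    split_ifs with hi
    · rw [← mul_assoc, sign_mul_self, one_mul, insert_erase hi]
    · rfl
  rw [Finset.sum_apply, sum_congr rfl fun i _ => hterm i, sum_ite_mem, univ_inter, sum_const,
    nsmul_eq_mul, Pi.smul_apply, smul_eq_mul]
  rcases eq_or_ne (v u) 0 with hvu | hvu
  · simp [hvu]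
  · rw [not_not.mp (mt (hv u) hvu)]

lemma imul_delta_singleton_comm (v : MV n) (i j : Fin n) :
    imul (imul v (delta {i})) (delta {j}) = -imul (imul v (delta {j})) (delta {i}) := by
  ext t
  simp only [Pi.neg_apply, imul_delta_singleton_apply, mem_insert]
  obtain rfl | hij := eq_or_ne i j
  · split_ifs <;> simp_all
  by_cases hi : i ∈ t
  · simp [hi]
  by_cases hj : j ∈ t
  · simp [hj]
  have h1 : sign {i} (insert j t) = sign {i} {j} * sign {i} t := by
    rw [insert_eq, sign_union_right _ (disjoint_singleton_left.mpr hj)]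
  have h2 : sign {j} (insert i t) = sign {j} {i} * sign {j} t := by
    rw [insert_eq, sign_union_right _ (disjoint_singleton_left.mpr hi)]
  simp only [hi, hj, hij, hij.symm, or_self, if_false, h1, h2, sign_singleton_swap hij,
    insert_comm i j]
  ring

lemma imul_embed_imul_delta_singleton_eq_zero {v : MV n} {x : Euc n}
    (h : imul v (embed x) = 0) (i : Fin n) : imul (imul v (delta {i})) (embed x) = 0 := by
  have hsmul : ∀ j, x j • imul (imul v (delta {j})) (delta {i})
      = imul (x j • imul v (delta {j})) (delta {i}) := fun j => (imul_smul_left _ _ _).symm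
  rw [imul_embed]
  simp_rw [imul_delta_singleton_comm v i, smul_neg, hsmul]
  rw [sum_neg_distrib, ← imul_sum_left, ← imul_embed, h, neg_eq_zero]
  exact map_zero (imulₗ.flip (delta {i}))

lemma sum_wedge_embed_imul_delta_eq_zero {v : MV n} {q : Fin n → Euc n}
    (hq : ∀ i j, q i j = q j i) (hv : ∀ j, imul v (embed (q j)) = 0) :
    ∑ i, wedge (embed (q i)) (imul v (delta {i})) = 0 := by
  calc ∑ i, wedge (embed (q i)) (imul v (delta {i}))
      = ∑ j, wedge (delta {j}) (∑ i, q j i • imul v (delta {i})) := by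
        simp_rw [wedge_embed_left, wedge_sum_right, wedge_smul_right]
        rw [sum_comm]
        exact sum_congr rfl fun j _ => sum_congr rfl fun i _ => by rw [hq]
    _ = 0 := by
        simp_rw [← imul_embed, hv]
        exact sum_eq_zero fun j _ => map_zero (wedgeₗ (delta {j}))

lemma smul_eq_sum_wedge_embed_imul_delta {k : ℕ} {v : MV n} (hk : IsGrade k v)
    {q : Fin n → Euc n} (hq : ∀ i j, q i j = q j i) (hv : ∀ j, imul v (embed (q j)) = 0) :
    (k : ℝ) • v
      = ∑ i, wedge (embed (EuclideanSpace.single i 1 - q i)) (imul v (delta {i})) := by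
  have hsplit : ∀ i, wedge (delta {i}) (imul v (delta {i}))
      = wedge (embed (EuclideanSpace.single i 1 - q i)) (imul v (delta {i}))
        + wedge (embed (q i)) (imul v (delta {i})) := fun i => by
    rw [← wedge_add_left, embed_sub, sub_add_cancel, delta_singleton_eq_embed]
  rw [← sum_wedge_delta_imul_delta hk, sum_congr rfl fun i _ => hsplit i, sum_add_distrib,
    sum_wedge_embed_imul_delta_eq_zero hq hv, add_zero]

lemma wedgeFam_cons {m : ℕ} (u : Euc n) (w : Fin m → Euc n) :
    wedgeFam (Fin.cons u w : Fin (m + 1) → Euc n) = wedge (embed u) (wedgeFam w) := by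
  simp [wedgeFam_succ]

lemma MemLambdaK.wedge_embed {m : ℕ} {z : MV n} {W : Submodule ℝ (Euc n)} {u : Euc n}
    (hz : MemLambdaK m z W) (hu : u ∈ W) : MemLambdaK (m + 1) (wedge (embed u) z) W := by
  unfold MemLambdaK at *
  refine (Submodule.span_le (p := (Submodule.span ℝ _).comap (wedgeₗ (embed u)))).mpr ?_ hz
  rintro _ ⟨w, hw, rfl⟩
  exact Submodule.subset_span ⟨Fin.cons u w, Fin.cases hu hw, (wedgeFam_cons u w).symm⟩

lemma memLambdaK_of_imul_embed_eq_zero {W : Submodule ℝ (Euc n)} {k : ℕ} {v : MV n}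
    (hv : IsGrade k v) (h : ∀ x ∈ Wᗮ, imul v (embed x) = 0) : MemLambdaK k v W := by
  induction k generalizing v with
  | zero =>
    have hv0 : v = v ∅ • wedgeFam (Fin.elim0 : Fin 0 → Euc n) := by
      ext s
      by_cases hs : s = ∅
      · simp [hs, wedgeFam_zero, delta]
      · simp [hs, wedgeFam_zero, delta, hv s (by simpa [card_eq_zero] using hs)]
    rw [hv0]
    exact Submodule.smul_mem _ _ (Submodule.subset_span ⟨Fin.elim0, fun i => i.elim0, rfl⟩)
  | succ k ih =>
    set q : Fin n → Euc n := fun i => Wᗮ.starProjection (EuclideanSpace.single i 1)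
    have hq : ∀ i j, q i j = q j i := fun i j => by
      simpa [q, EuclideanSpace.inner_single_left, EuclideanSpace.inner_single_right] using
        Wᗮ.inner_starProjection_left_eq_right (EuclideanSpace.single i (1 : ℝ))
          (EuclideanSpace.single j 1)
    have hpW : ∀ i, EuclideanSpace.single i 1 - q i ∈ W := fun i => by
      rw [← W.orthogonal_orthogonal]
      exact Wᗮ.sub_starProjection_mem_orthogonal _
    have hk : ((k + 1 : ℕ) : ℝ) ≠ 0 := by positivity
    rw [← inv_smul_smul₀ hk v,
      smul_eq_sum_wedge_embed_imul_delta hv hq fun j => h _ (Wᗮ.starProjection_apply_mem _)]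
    refine Submodule.smul_mem _ _ (Submodule.sum_mem _ fun i _ => ?_)
    exact MemLambdaK.wedge_embed (ih (hv.imul_delta_singleton i) fun x hx =>
      imul_embed_imul_delta_singleton_eq_zero (h x hx) i) (hpW i)

lemma imul_embed_apply_eq_inner (v : MV n) (x : Euc n) (t : Finset (Fin n)) :
    imul v (embed x) t = (-1 : ℝ) ^ #t * inner ℝ (toVec (imul v (delta t))) x := by
  simp only [imul_embed_apply, PiLp.inner_apply, toVec_apply, imul_delta_apply,
    disjoint_singleton_right, mul_sum]
  refine sum_congr rfl fun i _ => ?_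
  split_ifs with hi
  · simp
  · rw [sign_singleton_eq hi, union_comm, ← insert_eq, RCLike.inner_apply, conj_trivial]
    ring

lemma imul_embed_eq_zero_of_mem_orthogonal {k : ℕ} {v : MV n} (hv : IsGrade k v) {x : Euc n}
    (hx : x ∈ (Submodule.span ℝ (spanSet k v))ᗮ) : imul v (embed x) = 0 := by
  ext t
  by_cases ht : #t = k - 1
  · have hmem : toVec (imul v (delta t)) ∈ spanSet k v := ⟨delta t, ht ▸ isGrade_delta t, rfl⟩
    rw [imul_embed_apply_eq_inner, Pi.zero_apply,
      Submodule.inner_right_of_mem_orthogonal (Submodule.subset_span hmem) hx, mul_zero]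
  · exact hv.imul_embed x t ht

end Spanning

end MV

theorem statement14_general {n k : ℕ} (v : MV n) (hg : MV.IsGrade k v) :
    MemLambdaK k v (Submodule.span ℝ (MV.spanSet k v)) ∧
      ∀ W : Submodule ℝ (Euc n), MemLambdaK k v W →
        MV.spanSet k v ⊆ (W : Set (Euc n)) := by
  refine ⟨MV.memLambdaK_of_imul_embed_eq_zero hg fun x hx =>
    MV.imul_embed_eq_zero_of_mem_orthogonal hg hx, ?_⟩
  rintro W hW _ ⟨a, ha, rfl⟩
  exact MV.toVec_imul_mem_of_memLambdaK hW ha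

/-- **Section 2.2, property (5).** `span(v)` is the smallest linear subspace `W ⊆ ℝⁿ`
with `v ∈ Λ_k(W)`. -/
theorem statement14 {n k : ℕ} (hk : 1 ≤ k) (hkn : k ≤ n)
    (v : MV n) (hg : MV.IsGrade k v) :
    MemLambdaK k v (Submodule.span ℝ (MV.spanSet k v)) ∧
      ∀ W : Submodule ℝ (Euc n), MemLambdaK k v W →
        MV.spanSet k v ⊆ (W : Set (Euc n)) :=
  statement14_general v hg
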